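/- Let y_1 = max over t in [π,2π] of |sin(t)/t|. For every y in (0,y_1), the unique solution t_0 in (0,π) of sin(t)/t = y satisfies t_0 > 2. -/

import Mathlib

/-!
On `[π, 2π]` we have `|sin t / t| ≤ 1 / π`, so `y < y₁ ≤ 1 / π`. On the other hand `sin` is
concave on `[0, π]` and vanishes at `0`, so the secant slope `sin t / t` is antitone there;
hence `t₀ ≤ 2` would give `y ≥ sin 2 / 2`, while Jordan's inequality applied to `π - 2 ≥ 1` gives
`sin 2 = sin (π - 2) ≥ 2 / π`.
-/

open Real Set

namespace Real

theorem antitoneOn_sin_div : AntitoneOn (fun t => sin t / t) (Ioc 0 π) := by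
  have hslope := strictConcaveOn_sin_Icc.concaveOn.antitoneOn_slope_gt
    (left_mem_Icc.2 pi_pos.le)
  intro s hs t ht hst
  simpa [slope_def_field] using
    hslope ⟨Ioc_subset_Icc_self hs, hs.1⟩ ⟨Ioc_subset_Icc_self ht, ht.1⟩ hst

theorem two_div_pi_le_sin_two : 2 / π ≤ sin 2 :=
  calc 2 / π ≤ 2 / π * (π - 2) := le_mul_of_one_le_right (by positivity) (by linarith [pi_gt_three])
    _ ≤ sin (π - 2) := mul_le_sin (by linarith [pi_gt_three]) (by linarith [pi_le_four])
    _ = sin 2 := sin_pi_sub 2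

theorem sSup_abs_sin_div_Icc_le {a : ℝ} (ha : 0 < a) (b : ℝ) :
    sSup ((fun t => |sin t / t|) '' Icc a b) ≤ 1 / a := by
  refine Real.sSup_le ?_ (by positivity)
  rintro _ ⟨t, ht, rfl⟩
  show |sin t / t| ≤ 1 / a
  rw [abs_div, abs_of_pos (ha.trans_le ht.1)]
  exact div_le_div₀ zero_le_one (abs_sin_le_one t) ha ht.1

end Real

theorem solution_gt_two
    (y₁ : ℝ) (hy₁ : y₁ = sSup ((fun t => |Real.sin t / t|) '' Icc π (2 * π)))
    (y : ℝ) (hy : y ∈ Ioo 0 y₁)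
    (t₀ : ℝ) (ht₀ : t₀ ∈ Ioo 0 π) (hsol : Real.sin t₀ / t₀ = y) :
    t₀ > 2 := by
  by_contra! ht₀_le
  have hy₁_le : y₁ ≤ 1 / π := hy₁ ▸ sSup_abs_sin_div_Icc_le pi_pos _
  have hy_ge : sin 2 / 2 ≤ y :=
    hsol ▸ antitoneOn_sin_div ⟨ht₀.1, ht₀.2.le⟩ ⟨two_pos, two_le_pi⟩ ht₀_le
  have h_sin_two : 1 / π ≤ sin 2 / 2 := by
    linarith [two_div_pi_le_sin_two, show 2 / π = 2 * (1 / π) by ring]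
  linarith [hy.2]
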